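/- arXiv:1811.06734 — 7 statements merged into one kernel-verified Lean document; each statement's English description precedes it below -/
import Mathlib

section
/- For every real number x, the exponential generating function of the central Fubini-like polynomials satisfies, as an identity of formal power series in ℝ[[t]]: (1 − 2x·S(t)) · ∑_{n≥0} 𝔠_n(x)·t^n/n! = 1, where S(t) := ∑_{m≥0} t^{2m+1}/(2^{2m+1}·(2m+1)!) is the formal power series of sinh(t/2); i.e., ∑_{n≥0} 𝔠_n(x)·t^n/n! = 1/(1 − 2x·sinh(t/2)). -/
open Nat Finset

/-- Central factorial numbers of the second kind. -/
noncomputable def centralT (n k : ℕ) : ℝ :=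
  (1 / (k ! : ℝ)) * ∑ j ∈ Finset.range (k + 1),
    (-1 : ℝ) ^ j * (k.choose j : ℝ) * ((k : ℝ) / 2 - (j : ℝ)) ^ n

/-- Central Fubini-like polynomials. -/
noncomputable def centralFubini (n : ℕ) (x : ℝ) : ℝ :=
  ∑ k ∈ Finset.range (n + 1), (k ! : ℝ) * centralT n k * x ^ k

/-- Formal power series of `sinh (t/2)`:  `∑_{m≥0} t^(2m+1)/(2^(2m+1)·(2m+1)!)`. -/
noncomputable def sinhHalf : PowerSeries ℝ :=
  PowerSeries.mk fun m => if m % 2 = 1 then 1 / (2 ^ m * (m ! : ℝ)) else 0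

/-!
Since `2 sinh (t/2) = e^{t/2} - e^{-t/2}`, the binomial theorem shows that the `n`-th coefficient
of `(2x sinh (t/2))^k` is `x^k k! T(n,k) / n!`, so `∑ₙ 𝔠ₙ(x) tⁿ/n!` is the geometric series
`∑ₖ (2x sinh (t/2))^k`; it makes sense coefficientwise because `sinh (t/2)` has no constant term,
and it inverts `1 - 2x sinh (t/2)`.
-/

namespace PowerSeries

section Geometric

variable {R : Type*} [CommRing R] {u : R⟦X⟧}

theorem X_pow_dvd_pow_of_constantCoeff_eq_zero (hu : constantCoeff u = 0) (k : ℕ) :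
    X ^ k ∣ u ^ k :=
  pow_dvd_pow_of_dvd (X_dvd_iff.mpr hu) k

theorem coeff_pow_eq_zero_of_lt (hu : constantCoeff u = 0) {m k : ℕ} (hmk : m < k) :
    coeff m (u ^ k) = 0 :=
  X_pow_dvd_iff.mp (X_pow_dvd_pow_of_constantCoeff_eq_zero hu k) m hmk

theorem one_sub_mul_mk_sum_coeff_pow (hu : constantCoeff u = 0) :
    (1 - u) * mk (fun n => ∑ k ∈ range (n + 1), coeff n (u ^ k)) = 1 := by
  set F := mk fun n => ∑ k ∈ range (n + 1), coeff n (u ^ k)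
  ext n
  set G := ∑ k ∈ range (n + 1), u ^ k
  have hFG : X ^ (n + 1) ∣ F - G := by
    refine X_pow_dvd_iff.mpr fun m hm => ?_
    rw [map_sub, coeff_mk, map_sum, sub_eq_zero]
    refine sum_subset (range_subset_range.mpr hm) fun k _ hk => ?_
    exact coeff_pow_eq_zero_of_lt hu (by simpa using hk)
  have hdvd : X ^ (n + 1) ∣ (1 - u) * F - 1 := by
    have : (1 - u) * F - 1 = (1 - u) * (F - G) - u ^ (n + 1) := by
      linear_combination mul_neg_geom_sum u (n + 1)
    rw [this]
    exact dvd_sub (dvd_mul_of_dvd_right hFG _) (X_pow_dvd_pow_of_constantCoeff_eq_zero hu _)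
  simpa [sub_eq_zero] using X_pow_dvd_iff.mp hdvd n n.lt_succ_self

end Geometric

section Exp

variable {A : Type*} [CommRing A] [Algebra ℚ A]

theorem rescale_exp_pow (a : A) (k : ℕ) :
    rescale a (exp A) ^ k = rescale (k * a) (exp A) := by
  rw [← map_pow, exp_pow_eq_rescale_exp, rescale_rescale]

theorem rescale_exp_sub_pow (a b : A) (k : ℕ) :
    (rescale a (exp A) - rescale b (exp A)) ^ k =
      ∑ j ∈ range (k + 1),
        C ((-1 : A) ^ j * (k.choose j : A)) * rescale ((k - j : ℕ) * a + j * b) (exp A) := by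
  rw [sub_eq_neg_add, add_pow]
  refine sum_congr rfl fun j _ => ?_
  rw [neg_pow, rescale_exp_pow, rescale_exp_pow, ← exp_mul_exp_eq_exp_add, map_mul, map_pow,
    map_neg, map_one, map_natCast]
  ring

end Exp

theorem coeff_rescale_exp {K : Type*} [Field K] [CharZero K] (a : K) (n : ℕ) :
    coeff n (rescale a (exp K)) = a ^ n / n ! := by
  simp [coeff_rescale, coeff_exp, div_eq_mul_inv]

end PowerSeries

open PowerSeries

theorem factorial_mul_centralT (n k : ℕ) :
    (k ! : ℝ) * centralT n k =
      ∑ j ∈ range (k + 1), (-1) ^ j * (k.choose j : ℝ) * ((k : ℝ) / 2 - j) ^ n := by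
  rw [centralT, ← mul_assoc, mul_one_div_cancel (by positivity), one_mul]

theorem C_two_mul_sinhHalf :
    C 2 * sinhHalf = rescale (1 / 2) (exp ℝ) - rescale (-(1 / 2)) (exp ℝ) := by
  ext n
  rw [coeff_C_mul, map_sub, coeff_rescale_exp, coeff_rescale_exp, sinhHalf, coeff_mk]
  rcases Nat.even_or_odd n with hn | hn
  · simp [hn.neg_pow, Nat.even_iff.mp hn]
  · rw [hn.neg_pow, if_pos (Nat.odd_iff.mp hn), div_pow, one_pow]
    field_simp
    ring

theorem coeff_two_mul_sinhHalf_pow (n k : ℕ) :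
    coeff n ((C 2 * sinhHalf) ^ k) = k ! * centralT n k / n ! := by
  rw [C_two_mul_sinhHalf, rescale_exp_sub_pow, factorial_mul_centralT, map_sum, sum_div]
  refine sum_congr rfl fun j hj => ?_
  have hjk : j ≤ k := Nat.lt_succ_iff.mp (mem_range.mp hj)
  rw [coeff_C_mul, coeff_rescale_exp, Nat.cast_sub hjk]
  ring

theorem central_fubini_poly_egf (x : ℝ) :
    (1 - PowerSeries.C (2 * x) * sinhHalf) *
      PowerSeries.mk (fun n => centralFubini n x / (n ! : ℝ)) = 1 := by
  have hcoeff : ∀ n, centralFubini n x / n ! =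
      ∑ k ∈ range (n + 1), coeff n ((C (2 * x) * sinhHalf) ^ k) := by
    intro n
    rw [centralFubini, sum_div]
    refine sum_congr rfl fun k _ => ?_
    rw [mul_comm (2 : ℝ), map_mul, mul_assoc (C x), mul_pow, ← map_pow, coeff_C_mul,
      coeff_two_mul_sinhHalf_pow]
    ring
  have hconst : constantCoeff (C (2 * x) * sinhHalf) = 0 := by
    simp [sinhHalf]
  simpa only [hcoeff] using one_sub_mul_mk_sum_coeff_pow hconst
end

section
/- For every integer n ≥ 1 and every real number x, 𝔠_n(x) = x · ∑_{k=0}^{n−1} binom(n,k) ∑_{j=0}^{k} binom(k,j) · (−1/2)^{k−j} · 𝔠_j(x), and equivalently 𝔠_n(x) = x · ∑_{j=0}^{n−1} binom(n,j) · δ[0^{n−j}] · 𝔠_j(x), where δ[0^{m}] := (1/2)^m − (−1/2)^m. -/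
/-!
`k! T(n,k)` is the `k`-th central difference of `r ↦ r ^ n` at `0`, i.e. the `k`-th forward
difference at `-k/2`. Since `(r + 1/2)^n - (r - 1/2)^n = ∑ⱼ C(n,j) δ[0^(n-j)] r^j`, peeling off one
difference gives `(k+1)! T(n,k+1) = ∑ⱼ C(n,j) δ[0^(n-j)] k! T(j,k)`; multiplying by `x^(k+1)` and
summing over `k` yields the second recurrence, because `T(j,k) = 0` for `k > j` (iterated
differences kill polynomials of lower degree). The first recurrence follows from the second by
`∑ₖ C(n,k) C(k,j) y^(k-j) = C(n,j) (1+y)^(n-j)` at `y = -1/2`.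
-/

open Nat Finset

open fwdDiff Function

theorem sum_Ico_choose_mul_choose_mul_pow {R : Type*} [CommSemiring R] (n j : ℕ) (y : R) :
    ∑ k ∈ Ico j (n + 1), (n.choose k * k.choose j * y ^ (k - j) : R) =
      n.choose j * (y + 1) ^ (n - j) := by
  rcases lt_or_ge n j with hnj | hjn
  · simp [Ico_eq_empty_of_le (Nat.succ_le_of_lt hnj), choose_eq_zero_of_lt hnj]
  rw [sum_Ico_eq_sum_range, Nat.sub_add_comm hjn, add_pow, mul_sum]
  refine sum_congr rfl fun m _ => ?_
  have h := choose_mul (n := n) (le_add_right j m)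
  rw [Nat.add_sub_cancel_left] at h
  rw [Nat.add_sub_cancel_left, one_pow, mul_one, ← Nat.cast_mul, h]
  push_cast
  ring

theorem factorial_mul_centralT_s4 (n k : ℕ) :
    (k ! : ℝ) * centralT n k = Δ_[1] ^[k] (fun r : ℝ => r ^ n) (-(k / 2)) := by
  rw [fwdDiff_iter_eq_sum_shift, centralT, ← mul_assoc, mul_one_div_cancel (by positivity), one_mul,
    ← sum_range_reflect]
  refine sum_congr rfl fun j hj => ?_
  have hjk : j ≤ k := Nat.lt_succ_iff.mp (mem_range.mp hj)
  rw [add_tsub_cancel_right, choose_symm hjk, zsmul_eq_mul, nsmul_eq_mul]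
  push_cast [hjk]
  ring

theorem centralT_eq_zero_of_lt {n k : ℕ} (h : n < k) : centralT n k = 0 := by
  have h' := factorial_mul_centralT_s4 n k
  rw [fwdDiff_iter_pow_eq_zero_of_lt h, Pi.zero_apply] at h'
  simpa [factorial_ne_zero] using h'

theorem centralT_zero_right {n : ℕ} (hn : n ≠ 0) : centralT n 0 = 0 := by
  simp [centralT, hn]

theorem factorial_mul_centralT_succ (n k : ℕ) :
    ((k + 1)! : ℝ) * centralT n (k + 1) = ∑ j ∈ range (n + 1),
      n.choose j * ((1 / 2 : ℝ) ^ (n - j) - (-1 / 2 : ℝ) ^ (n - j)) * (k ! * centralT j k) := by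
  -- one forward difference of `r ^ n`, moved back by `1 / 2`, is the central difference
  have hshift : (fun r : ℝ => Δ_[1] (fun r : ℝ => r ^ n) (r + -(1 / 2))) = ∑ j ∈ range (n + 1),
      (n.choose j * ((1 / 2 : ℝ) ^ (n - j) - (-1 / 2 : ℝ) ^ (n - j))) • fun r : ℝ => r ^ j := by
    ext r
    simp only [fwdDiff, Finset.sum_apply, Pi.smul_apply, smul_eq_mul]
    rw [show r + -(1 / 2) + 1 = r + 1 / 2 by ring, show r + -(1 / 2) = r + -1 / 2 by ring,
      add_pow, add_pow, ← sum_sub_distrib]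
    exact sum_congr rfl fun j _ => by ring
  simp_rw [factorial_mul_centralT_s4]
  calc Δ_[1] ^[k + 1] (fun r : ℝ => r ^ n) (-(↑(k + 1) / 2))
      = Δ_[1] ^[k] (fun r : ℝ => Δ_[1] (fun r : ℝ => r ^ n) (r + -(1 / 2))) (-(k / 2)) := by
        rw [fwdDiff_iter_comp_add, iterate_succ_apply]
        push_cast
        ring_nf
    _ = _ := by
        rw [hshift, fwdDiff_iter_finsetSum, Finset.sum_apply]
        simp only [fwdDiff_iter_const_smul, Pi.smul_apply, smul_eq_mul]

theorem sum_range_factorial_mul_centralT_mul_pow {j N : ℕ} (hj : j ≤ N) (x : ℝ) :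
    ∑ k ∈ range (N + 1), (k ! : ℝ) * centralT j k * x ^ k = centralFubini j x := by
  refine (sum_subset (range_subset_range.mpr (by omega)) fun k hkN hkj => ?_).symm
  rw [centralT_eq_zero_of_lt (by simpa using hkj), mul_zero, zero_mul]

theorem centralFubini_eq_mul_sum_choose_mul_centralFubini {n : ℕ} (hn : n ≠ 0) (x : ℝ) :
    centralFubini n x = x * ∑ j ∈ range n,
      n.choose j * ((1 / 2 : ℝ) ^ (n - j) - (-1 / 2 : ℝ) ^ (n - j)) * centralFubini j x := by
  calc centralFubini n x = ∑ k ∈ range (n + 1 + 1), (k ! : ℝ) * centralT n k * x ^ k :=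
        (sum_range_factorial_mul_centralT_mul_pow (by omega) x).symm
    _ = x * ∑ k ∈ range (n + 1), ∑ j ∈ range (n + 1),
          n.choose j * ((1 / 2 : ℝ) ^ (n - j) - (-1 / 2 : ℝ) ^ (n - j)) *
            ((k ! : ℝ) * centralT j k * x ^ k) := by
        rw [sum_range_succ', centralT_zero_right hn, mul_zero, zero_mul, add_zero, mul_sum]
        refine sum_congr rfl fun k _ => ?_
        rw [factorial_mul_centralT_succ, sum_mul, mul_sum]
        exact sum_congr rfl fun j _ => by ring
    _ = x * ∑ j ∈ range (n + 1),
          n.choose j * ((1 / 2 : ℝ) ^ (n - j) - (-1 / 2 : ℝ) ^ (n - j)) * centralFubini j x := by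
        rw [sum_comm]
        congr 1
        refine sum_congr rfl fun j hj => ?_
        rw [← mul_sum, sum_range_factorial_mul_centralT_mul_pow (mem_range_succ_iff.mp hj)]
    _ = _ := by simp [sum_range_succ]

theorem sum_range_choose_mul_sum_choose_mul_neg_half_pow (n : ℕ) (c : ℕ → ℝ) :
    ∑ k ∈ range n, n.choose k * ∑ j ∈ range (k + 1), k.choose j * (-1 / 2 : ℝ) ^ (k - j) * c j =
      ∑ j ∈ range n, n.choose j * ((1 / 2 : ℝ) ^ (n - j) - (-1 / 2 : ℝ) ^ (n - j)) * c j := by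
  simp_rw [range_eq_Ico, mul_sum]
  rw [← sum_Ico_Ico_comm]
  refine sum_congr rfl fun j hj => ?_
  have hjn : j ≤ n := (mem_Ico.mp hj).2.le
  have hbinom := sum_Ico_choose_mul_choose_mul_pow n j (-1 / 2 : ℝ)
  rw [sum_Ico_succ_top hjn, choose_self, Nat.cast_one, one_mul] at hbinom
  calc _ = (∑ k ∈ Ico j n, n.choose k * k.choose j * (-1 / 2 : ℝ) ^ (k - j)) * c j := by
        rw [sum_mul]
        exact sum_congr rfl fun k _ => by ring
    _ = _ := by
        rw [eq_sub_of_add_eq hbinom, show (-1 / 2 + 1 : ℝ) = 1 / 2 by norm_num]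
        ring

theorem central_fubini_recurrence (n : ℕ) (hn : 1 ≤ n) (x : ℝ) :
    centralFubini n x =
      x * ∑ k ∈ Finset.range n, (n.choose k : ℝ) *
        ∑ j ∈ Finset.range (k + 1),
          (k.choose j : ℝ) * (-1 / 2 : ℝ) ^ (k - j) * centralFubini j x ∧
    centralFubini n x =
      x * ∑ j ∈ Finset.range n, (n.choose j : ℝ) *
        ((1 / 2 : ℝ) ^ (n - j) - (-1 / 2 : ℝ) ^ (n - j)) * centralFubini j x := by
  rw [sum_range_choose_mul_sum_choose_mul_neg_half_pow, and_self]
  exact centralFubini_eq_mul_sum_choose_mul_centralFubini (by omega) x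
end

section
/- For every integer n ≥ 1, the central Fubini-like numbers satisfy 𝔠_n = ∑_{j=0}^{n−1} binom(n,j) · δ[0^{n−j}] · 𝔠_j, where δ[0^{m}] := (1/2)^m − (−1/2)^m. -/
open Nat Finset

/-- Central Fubini-like numbers. -/
noncomputable def centralFubiniNum (n : ℕ) : ℝ := centralFubini n 1

noncomputable def Afun (n k : ℕ) : ℝ :=
  ∑ i ∈ Finset.range (k + 1), (-1 : ℝ) ^ i * (k.choose i : ℝ) * ((k : ℝ) / 2 - (i : ℝ)) ^ n

lemma fact_mul_centralT (n k : ℕ) : (k ! : ℝ) * centralT n k = Afun n k := by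
  unfold centralT Afun
  rw [← mul_assoc, mul_one_div, div_self (by positivity : (k ! : ℝ) ≠ 0), one_mul]

lemma Afun_succ (n k : ℕ) :
    Afun n (k + 1) = ∑ j ∈ Finset.range (n + 1),
      (n.choose j : ℝ) * ((1 / 2 : ℝ) ^ (n - j) - (-1 / 2 : ℝ) ^ (n - j)) * Afun j k := by
  have key : ∀ i : ℕ,
      ∑ j ∈ Finset.range (n + 1), (n.choose j : ℝ) * ((1 / 2 : ℝ) ^ (n - j) - (-1 / 2 : ℝ) ^ (n - j)) *
        ((-1 : ℝ) ^ i * (k.choose i : ℝ) * ((k : ℝ) / 2 - (i : ℝ)) ^ j)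
      = (-1 : ℝ) ^ i * (k.choose i : ℝ) *
        ((((k : ℝ) + 1) / 2 - (i : ℝ)) ^ n - (((k : ℝ) + 1) / 2 - ((i : ℝ) + 1)) ^ n) := by
    intro i
    have h1 : (((k : ℝ) + 1) / 2 - (i : ℝ)) = ((k : ℝ) / 2 - (i : ℝ)) + 1 / 2 := by ring
    have h2 : (((k : ℝ) + 1) / 2 - ((i : ℝ) + 1)) = ((k : ℝ) / 2 - (i : ℝ)) + (-1 / 2) := by ring
    rw [h1, h2, add_pow, add_pow, ← Finset.sum_sub_distrib, Finset.mul_sum]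
    refine Finset.sum_congr rfl fun j _ => by ring
  -- rewrite RHS
  have hRHS : ∑ j ∈ Finset.range (n + 1),
      (n.choose j : ℝ) * ((1 / 2 : ℝ) ^ (n - j) - (-1 / 2 : ℝ) ^ (n - j)) * Afun j k
      = ∑ i ∈ Finset.range (k + 1), (-1 : ℝ) ^ i * (k.choose i : ℝ) *
        ((((k : ℝ) + 1) / 2 - (i : ℝ)) ^ n - (((k : ℝ) + 1) / 2 - ((i : ℝ) + 1)) ^ n) := by
    simp only [Afun, Finset.mul_sum]
    rw [Finset.sum_comm]
    exact Finset.sum_congr rfl fun i _ => key i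
  rw [hRHS]
  -- now pure Pascal telescoping
  set g : ℕ → ℝ := fun i => (((k : ℝ) + 1) / 2 - (i : ℝ)) ^ n with hg
  have hcast : ∀ i : ℕ, (((k : ℝ) + 1) / 2 - ((i : ℝ) + 1)) ^ n = g (i + 1) := by
    intro i; simp [hg]
  have hA : Afun n (k + 1) = ∑ i ∈ Finset.range (k + 2), (-1 : ℝ) ^ i * ((k+1).choose i : ℝ) * g i := by
    unfold Afun
    refine Finset.sum_congr rfl fun i _ => by simp [hg]
  rw [hA]
  have expand : ∑ i ∈ Finset.range (k + 1), (-1 : ℝ) ^ i * (k.choose i : ℝ) *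
      ((((k : ℝ) + 1) / 2 - (i : ℝ)) ^ n - (((k : ℝ) + 1) / 2 - ((i : ℝ) + 1)) ^ n)
      = ∑ i ∈ Finset.range (k + 1), (-1 : ℝ) ^ i * (k.choose i : ℝ) * (g i - g (i + 1)) := by
    refine Finset.sum_congr rfl fun i _ => by rw [hcast i]
  rw [expand]
  rw [Finset.sum_range_succ' (fun i => (-1 : ℝ) ^ i * ((k+1).choose i : ℝ) * g i) (k+1)]
  have hP : ∀ i ∈ Finset.range (k + 1),
      (-1 : ℝ) ^ (i + 1) * (((k+1).choose (i+1) : ℕ) : ℝ) * g (i + 1)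
      = (-1 : ℝ) ^ (i + 1) * ((k.choose i : ℝ) + (k.choose (i+1) : ℝ)) * g (i + 1) := by
    intro i _
    rw [Nat.choose_succ_succ]
    push_cast
    ring
  rw [Finset.sum_congr rfl hP]
  simp only [mul_add, add_mul]
  rw [Finset.sum_add_distrib]
  have e1 : ∑ i ∈ Finset.range (k + 1), (-1 : ℝ) ^ (i + 1) * (k.choose i : ℝ) * g (i + 1)
      = - ∑ i ∈ Finset.range (k + 1), (-1 : ℝ) ^ i * (k.choose i : ℝ) * g (i + 1) := by
    rw [← Finset.sum_neg_distrib]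
    exact Finset.sum_congr rfl fun i _ => by ring
  have e2 : ∑ i ∈ Finset.range (k + 1), (-1 : ℝ) ^ (i + 1) * (k.choose (i+1) : ℝ) * g (i + 1)
      + (-1 : ℝ) ^ 0 * (((k+1).choose 0 : ℕ) : ℝ) * g 0
      = ∑ i ∈ Finset.range (k + 1), (-1 : ℝ) ^ i * (k.choose i : ℝ) * g i := by
    rw [Finset.sum_range_succ (fun i => (-1 : ℝ) ^ (i+1) * (k.choose (i+1) : ℝ) * g (i+1)) k]
    rw [Nat.choose_succ_self]
    rw [Finset.sum_range_succ' (fun i => (-1 : ℝ) ^ i * (k.choose i : ℝ) * g i) k]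
    simp
  have e3 : ∑ i ∈ Finset.range (k + 1), (-1 : ℝ) ^ i * (k.choose i : ℝ) * (g i - g (i + 1))
      = ∑ i ∈ Finset.range (k + 1), (-1 : ℝ) ^ i * (k.choose i : ℝ) * g i
      - ∑ i ∈ Finset.range (k + 1), (-1 : ℝ) ^ i * (k.choose i : ℝ) * g (i + 1) := by
    rw [← Finset.sum_sub_distrib]
    exact Finset.sum_congr rfl fun i _ => by ring
  linarith [e1, e2, e3]

lemma Afun_eq_zero : ∀ k n : ℕ, n < k → Afun n k = 0 := by
  intro k
  induction k with
  | zero => intro n hn; omega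
  | succ k ih =>
    intro n hn
    rw [Afun_succ]
    refine Finset.sum_eq_zero fun j hj => ?_
    rcases eq_or_lt_of_le (Nat.lt_succ_iff.mp (Finset.mem_range.mp hj)) with h | h
    · subst h; simp
    · rw [ih j (by omega)]; ring

theorem central_fubini_num_recurrence (n : ℕ) (hn : 1 ≤ n) :
    centralFubiniNum n =
      ∑ j ∈ Finset.range n, (n.choose j : ℝ) *
        ((1 / 2 : ℝ) ^ (n - j) - (-1 / 2 : ℝ) ^ (n - j)) * centralFubiniNum j := by
  have hcf : ∀ m : ℕ, centralFubiniNum m = ∑ k ∈ Finset.range (m + 1), Afun m k := by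
    intro m
    unfold centralFubiniNum centralFubini
    exact Finset.sum_congr rfl fun k _ => by rw [one_pow, mul_one, fact_mul_centralT]
  rw [hcf n, Finset.sum_range_succ' (fun k => Afun n k) n]
  have h0 : Afun n 0 = 0 := by
    unfold Afun
    simp [zero_pow (by omega : n ≠ 0)]
  rw [h0, add_zero]
  have hstep : ∑ k ∈ Finset.range n, Afun n (k + 1)
      = ∑ j ∈ Finset.range (n + 1), (n.choose j : ℝ) *
          ((1 / 2 : ℝ) ^ (n - j) - (-1 / 2 : ℝ) ^ (n - j)) *
          ∑ k ∈ Finset.range n, Afun j k := by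
    simp only [Afun_succ, Finset.mul_sum]
    rw [Finset.sum_comm]
  rw [hstep, Finset.sum_range_succ]
  simp only [Nat.sub_self, pow_zero, sub_self, mul_zero, zero_mul, add_zero]
  refine Finset.sum_congr rfl fun j hj => ?_
  have hjn : j < n := Finset.mem_range.mp hj
  congr 1
  rw [hcf j]
  symm
  refine Finset.sum_subset (by intro x hx; simp at hx ⊢; omega) ?_
  intro k hk hk'
  simp only [Finset.mem_range] at hk hk'
  exact Afun_eq_zero k j (by omega)
end

section
/- For every nonnegative integer n and every real number x, 𝔠_n(x) = ∑_{k=0}^{n} k! · x^k · ∑_{j=0}^{n} binom(n,j) · (−k/2)^j · S(n−j, k), where S(m,k) denotes the Stirling numbers of the second kind (the terms with k > n vanish, so summing k up to n loses nothing). -/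
open Nat Finset

/-- Stirling numbers of the second kind. -/
noncomputable def stirling2 (m k : ℕ) : ℝ :=
  (1 / (k ! : ℝ)) * ∑ i ∈ Finset.range (k + 1),
    (-1 : ℝ) ^ i * (k.choose i : ℝ) * ((k : ℝ) - (i : ℝ)) ^ m

lemma centralT_key (n k : ℕ) :
    centralT n k = ∑ j ∈ Finset.range (n + 1),
      (n.choose j : ℝ) * (-(k : ℝ) / 2) ^ j * stirling2 (n - j) k := by
  unfold centralT stirling2
  have h : ∀ i : ℕ, ((k : ℝ) / 2 - (i : ℝ)) ^ n =
      ∑ j ∈ Finset.range (n + 1),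
        (-(k : ℝ) / 2) ^ j * ((k : ℝ) - (i : ℝ)) ^ (n - j) * (n.choose j : ℝ) := by
    intro i
    have := add_pow (-(k : ℝ) / 2) ((k : ℝ) - (i : ℝ)) n
    rw [← this]; ring_nf
  simp_rw [h, Finset.mul_sum]
  rw [Finset.sum_comm]
  apply Finset.sum_congr rfl
  intro j _
  apply Finset.sum_congr rfl
  intro i _
  ring

theorem central_fubini_stirling (n : ℕ) (x : ℝ) :
    centralFubini n x =
      ∑ k ∈ Finset.range (n + 1), (k ! : ℝ) * x ^ k *
        ∑ j ∈ Finset.range (n + 1),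
          (n.choose j : ℝ) * (-(k : ℝ) / 2) ^ j * stirling2 (n - j) k := by
  unfold centralFubini
  apply Finset.sum_congr rfl
  intro k _
  rw [centralT_key]
  ring
end

section
/- For every nonnegative integer n, the central Fubini-like numbers satisfy 𝔠_n = ∑_{k=0}^{n} k! · ∑_{j=0}^{n} binom(n,j) · (−k/2)^j · S(n−j, k), where S(m,k) denotes the Stirling numbers of the second kind (the terms with k > n vanish, so summing k up to n loses nothing). -/
open Nat Finset

theorem central_fubini_num_stirling (n : ℕ) :
    centralFubiniNum n =
      ∑ k ∈ Finset.range (n + 1), (k ! : ℝ) *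
        ∑ j ∈ Finset.range (n + 1),
          (n.choose j : ℝ) * (-(k : ℝ) / 2) ^ j * stirling2 (n - j) k := by
  unfold centralFubiniNum centralFubini centralT stirling2
  refine Finset.sum_congr rfl fun k _ => ?_
  have hk : (k ! : ℝ) ≠ 0 := Nat.cast_ne_zero.mpr k.factorial_ne_zero
  have key : ∀ i : ℕ, ((k:ℝ)/2 - (i:ℝ))^n
      = ∑ j ∈ Finset.range (n+1),
          (n.choose j : ℝ) * (-(k:ℝ)/2)^j * ((k:ℝ) - (i:ℝ))^(n-j) := by
    intro i
    have h := add_pow (-(k:ℝ)/2) ((k:ℝ) - (i:ℝ)) n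
    have h2 : -(k:ℝ)/2 + ((k:ℝ) - (i:ℝ)) = (k:ℝ)/2 - (i:ℝ) := by ring
    rw [h2] at h
    rw [h]
    exact Finset.sum_congr rfl fun j _ => by ring
  have main : (∑ i ∈ Finset.range (k+1),
        (-1:ℝ)^i * (k.choose i:ℝ) * ((k:ℝ)/2 - (i:ℝ))^n)
      = ∑ j ∈ Finset.range (n+1), (n.choose j : ℝ) * (-(k:ℝ)/2)^j *
          ∑ i ∈ Finset.range (k+1), (-1:ℝ)^i * (k.choose i:ℝ) * ((k:ℝ) - (i:ℝ))^(n-j) := by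
    simp_rw [key, Finset.mul_sum]
    rw [Finset.sum_comm]
    exact Finset.sum_congr rfl fun j _ => Finset.sum_congr rfl fun i _ => by ring
  rw [one_pow, mul_one]
  rw [main, Finset.mul_sum, Finset.mul_sum, Finset.mul_sum]
  exact Finset.sum_congr rfl fun j _ => by ring
end

section
/- For every nonnegative integer n and every real number x, 𝔠_n(x) = (−1)^n · 𝔠_n(−x); in particular 𝔠_n is an even polynomial when n is even and an odd polynomial when n is odd. -/
open Nat Finset

lemma centralT_parity (n k : ℕ) :
    centralT n k * (-1 : ℝ) ^ k = (-1 : ℝ) ^ n * centralT n k := by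
  have hS : ∑ j ∈ Finset.range (k + 1),
      (-1 : ℝ) ^ j * (k.choose j : ℝ) * ((k : ℝ) / 2 - (j : ℝ)) ^ n
      = (-1 : ℝ) ^ (n + k) * ∑ j ∈ Finset.range (k + 1),
        (-1 : ℝ) ^ j * (k.choose j : ℝ) * ((k : ℝ) / 2 - (j : ℝ)) ^ n := by
    conv_lhs => rw [← Finset.sum_range_reflect]
    rw [Finset.mul_sum]
    apply Finset.sum_congr rfl
    intro j hj
    have hj' : j ≤ k := by simpa using Nat.lt_succ_iff.mp (Finset.mem_range.mp hj)
    simp only [Nat.add_sub_cancel]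
    have hch : k.choose (k - j) = k.choose j := Nat.choose_symm hj'
    have hkj : (k - j) + j = k := by omega
    have h2 : (-1 : ℝ) ^ j * (-1 : ℝ) ^ j = 1 := by
      rw [← pow_add]; exact Even.neg_one_pow ⟨j, rfl⟩
    have hsign : (-1 : ℝ) ^ (k - j) = (-1 : ℝ) ^ k * (-1 : ℝ) ^ j := by
      conv_rhs => rw [← Nat.sub_add_cancel hj']
      rw [pow_add, mul_assoc, h2, mul_one]
    have hcast : ((k - j : ℕ) : ℝ) = (k : ℝ) - (j : ℝ) := by
      push_cast [hj']; ring
    have hrefl : (k : ℝ) / 2 - ((k - j : ℕ) : ℝ) = -((k : ℝ) / 2 - (j : ℝ)) := by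
      rw [hcast]; ring
    rw [hch, hsign, hrefl, neg_pow ((k : ℝ) / 2 - (j : ℝ)) n]
    ring
  unfold centralT
  rw [pow_add] at hS
  calc (1 / (k ! : ℝ)) * (∑ j ∈ Finset.range (k + 1),
        (-1 : ℝ) ^ j * (k.choose j : ℝ) * ((k : ℝ) / 2 - (j : ℝ)) ^ n) * (-1) ^ k
      = (1 / (k ! : ℝ)) * (((-1 : ℝ) ^ n * (-1) ^ k * ∑ j ∈ Finset.range (k + 1),
        (-1 : ℝ) ^ j * (k.choose j : ℝ) * ((k : ℝ) / 2 - (j : ℝ)) ^ n) * (-1) ^ k) := by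
        rw [← hS]; ring
    _ = (-1 : ℝ) ^ n * ((1 / (k ! : ℝ)) * ∑ j ∈ Finset.range (k + 1),
        (-1 : ℝ) ^ j * (k.choose j : ℝ) * ((k : ℝ) / 2 - (j : ℝ)) ^ n) := by
        have hk2 : ((-1 : ℝ) ^ k) * ((-1 : ℝ) ^ k) = 1 := by
          rw [← pow_add]; exact Even.neg_one_pow ⟨k, rfl⟩
        linear_combination (1 / (k ! : ℝ)) * (-1 : ℝ) ^ n *
          (∑ j ∈ Finset.range (k + 1),
            (-1 : ℝ) ^ j * (k.choose j : ℝ) * ((k : ℝ) / 2 - (j : ℝ)) ^ n) * hk2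

lemma centralFubini_neg (n : ℕ) (x : ℝ) :
    centralFubini n (-x) = (-1 : ℝ) ^ n * centralFubini n x := by
  unfold centralFubini
  rw [Finset.mul_sum]
  apply Finset.sum_congr rfl
  intro k _
  have := centralT_parity n k
  calc (k ! : ℝ) * centralT n k * (-x) ^ k
      = (k ! : ℝ) * (centralT n k * (-1) ^ k) * x ^ k := by
        rw [neg_pow]; ring
    _ = (-1 : ℝ) ^ n * ((k ! : ℝ) * centralT n k * x ^ k) := by rw [this]; ring

theorem central_fubini_parity (n : ℕ) (x : ℝ) :
    centralFubini n x = (-1 : ℝ) ^ n * centralFubini n (-x) ∧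
    (Even n → centralFubini n (-x) = centralFubini n x) ∧
    (Odd n → centralFubini n (-x) = -centralFubini n x) := by
  have h := centralFubini_neg n x
  refine ⟨?_, ?_, ?_⟩
  · rw [h, ← mul_assoc, ← pow_add]
    have : n + n = 2 * n := by ring
    rw [this, pow_mul]; norm_num
  · intro hn; rw [h, hn.neg_one_pow, one_mul]
  · intro hn; rw [h, hn.neg_one_pow]; ring
end

section
/- Fix a real number x. For every integer n ≥ 1, 𝔠_n(x)/n! = det(M_n), where M_n is the n×n lower Hessenberg matrix with entries (M_n)_{i,j} = R(i − j + 1) for 1 ≤ j ≤ i ≤ n, (M_n)_{i,i+1} = 1 for 1 ≤ i ≤ n−1, (M_n)_{i,j} = 0 for j > i+1, and R(j) := x·((−1)^{j−1}/j!)·((1/2)^j − (−1/2)^j). -/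
open Nat Finset

noncomputable def lamF (j : ℕ) : ℝ := (1/2 : ℝ)^j - (-1/2 : ℝ)^j

noncomputable def Sfun (k n : ℕ) : ℝ :=
  ∑ j ∈ Finset.range (k+1), (-1:ℝ)^j * (k.choose j : ℝ) * ((k:ℝ)/2 - (j:ℝ))^n

noncomputable def aF (x : ℝ) (n : ℕ) : ℝ := centralFubini n x / (n ! : ℝ)

lemma lamF_zero : lamF 0 = 0 := by simp [lamF]

lemma fact_S (n k : ℕ) : (k ! : ℝ) * centralT n k = Sfun k n := by
  have h : (k ! : ℝ) ≠ 0 := Nat.cast_ne_zero.mpr k.factorial_ne_zero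
  rw [centralT, Sfun]
  field_simp

lemma binom_key (n : ℕ) (c : ℝ) :
    ∑ m ∈ Finset.range (n+1), (n.choose m : ℝ) * lamF m * c ^ (n-m)
      = (c + 1/2)^n - (c - 1/2)^n := by
  have h1 : c + 1/2 = 1/2 + c := by ring
  have h2 : c - 1/2 = -1/2 + c := by ring
  rw [h1, h2, add_pow, add_pow, ← Finset.sum_sub_distrib]
  refine Finset.sum_congr rfl fun m _ => ?_
  rw [lamF]; ring

lemma S_rec (k n : ℕ) :
    Sfun (k+1) n = ∑ m ∈ Finset.range (n+1), (n.choose m : ℝ) * lamF m * Sfun k (n-m) := by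
  have swap : ∑ m ∈ Finset.range (n+1), (n.choose m : ℝ) * lamF m * Sfun k (n-m)
      = ∑ j ∈ Finset.range (k+1), (-1:ℝ)^j * (k.choose j : ℝ) *
          ((((k:ℝ)/2 - j) + 1/2)^n - (((k:ℝ)/2 - j) - 1/2)^n) := by
    unfold Sfun
    simp_rw [Finset.mul_sum]
    rw [Finset.sum_comm]
    refine Finset.sum_congr rfl fun j _ => ?_
    rw [← binom_key n ((k:ℝ)/2 - j), Finset.mul_sum]
    refine Finset.sum_congr rfl fun m _ => ?_
    ring
  rw [swap]
  unfold Sfun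
  rw [Finset.sum_range_succ']
  simp_rw [mul_sub]
  rw [Finset.sum_sub_distrib]
  rw [Finset.sum_range_succ' (fun j => (-1:ℝ)^j * (k.choose j : ℝ) * ((k:ℝ)/2 - (j:ℝ) + 1/2)^n)]
  have hA : ∑ j ∈ Finset.range (k+1), (-1:ℝ)^(j+1) * (((k+1).choose (j+1) : ℕ) : ℝ) *
        (((k+1:ℕ):ℝ)/2 - ((j+1:ℕ):ℝ))^n
      = (∑ j ∈ Finset.range (k+1), (-1:ℝ)^(j+1) * (k.choose j : ℝ) * ((k:ℝ)/2 - (j:ℝ) - 1/2)^n)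
        + ∑ j ∈ Finset.range (k+1), (-1:ℝ)^(j+1) * (k.choose (j+1) : ℝ) *
            ((k:ℝ)/2 - ((j+1:ℕ):ℝ) + 1/2)^n := by
    rw [← Finset.sum_add_distrib]
    refine Finset.sum_congr rfl fun j _ => ?_
    rw [Nat.choose_succ_succ]
    push_cast
    ring
  rw [hA]
  have hB : ∑ j ∈ Finset.range (k+1), (-1:ℝ)^(j+1) * (k.choose (j+1) : ℝ) *
        ((k:ℝ)/2 - ((j+1:ℕ):ℝ) + 1/2)^n
      = ∑ j ∈ Finset.range k, (-1:ℝ)^(j+1) * (k.choose (j+1) : ℝ) *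
        ((k:ℝ)/2 - ((j+1:ℕ):ℝ) + 1/2)^n := by
    rw [Finset.sum_range_succ]
    simp
  rw [hB]
  have hS : (∑ j ∈ Finset.range (k+1), (-1:ℝ)^(j+1) * (k.choose j : ℝ) * ((k:ℝ)/2 - (j:ℝ) - 1/2)^n)
      + ∑ j ∈ Finset.range (k+1), (-1:ℝ)^j * (k.choose j : ℝ) * ((k:ℝ)/2 - (j:ℝ) - 1/2)^n = 0 := by
    rw [← Finset.sum_add_distrib]
    exact Finset.sum_eq_zero fun j _ => by ring
  have hC : (((k+1:ℕ):ℝ)/2 - ((0:ℕ):ℝ))^n = ((k:ℝ)/2 - ((0:ℕ):ℝ) + 1/2)^n := by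
    push_cast; ring
  simp only [pow_zero, one_mul, Nat.choose_zero_right, Nat.cast_one]
  linarith [hS, hC]

lemma S_vanish (x : ℝ) : ∀ k N, N < k → Sfun k N = 0 := by
  intro k
  induction k with
  | zero => intro N h; omega
  | succ k ih =>
    intro N h
    rw [S_rec]
    refine Finset.sum_eq_zero fun m hm => ?_
    rcases Nat.eq_zero_or_pos m with rfl | hm1
    · simp [lamF_zero]
    · have : N - m < k := by
        simp only [Finset.mem_range] at hm; omega
      rw [ih _ this, mul_zero]

lemma cf_eq (n : ℕ) (x : ℝ) : centralFubini n x = ∑ k ∈ Finset.range (n+1), x^k * Sfun k n := by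
  unfold centralFubini
  refine Finset.sum_congr rfl fun k _ => ?_
  rw [fact_S]; ring

lemma cf_rec (x : ℝ) (n : ℕ) (hn : 1 ≤ n) :
    centralFubini n x
      = ∑ m ∈ Finset.range (n+1), (n.choose m : ℝ) * lamF m * x * centralFubini (n-m) x := by
  obtain ⟨p, rfl⟩ : ∃ p, n = p + 1 := ⟨n - 1, by omega⟩
  rw [cf_eq]
  rw [Finset.sum_range_succ']
  have h0 : Sfun 0 (p+1) = 0 := by simp [Sfun]
  rw [h0]
  simp only [mul_zero, pow_zero, one_mul, add_zero]
  have : ∑ k ∈ Finset.range (p+1), x^(k+1) * Sfun (k+1) (p+1)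
      = ∑ m ∈ Finset.range (p+2), ((p+1).choose m : ℝ) * lamF m * x *
          (∑ k ∈ Finset.range (p+1), x^k * Sfun k (p+1-m)) := by
    simp_rw [S_rec, Finset.mul_sum]
    rw [Finset.sum_comm]
    refine Finset.sum_congr rfl fun m _ => Finset.sum_congr rfl fun k _ => ?_
    rw [pow_succ]
    ring
  rw [this]
  refine Finset.sum_congr rfl fun m hm => ?_
  rcases Nat.eq_zero_or_pos m with rfl | hm1
  · simp [lamF_zero]
  · congr 1
    rw [cf_eq]
    refine (Finset.sum_subset (Finset.range_subset_range.mpr (by simp only [Finset.mem_range] at hm; omega)) ?_).symm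
    intro a ha hna
    simp only [Finset.mem_range] at ha hna
    rw [S_vanish x a (p+1-m) (by omega), mul_zero]

lemma aF_zero (x : ℝ) : aF x 0 = 1 := by
  simp [aF, centralFubini, centralT]

lemma aF_rec (x : ℝ) (n : ℕ) (hn : 1 ≤ n) :
    aF x n = ∑ m ∈ Finset.range (n+1), (x * lamF m / (m ! : ℝ)) * aF x (n-m) := by
  have hfne : ∀ k : ℕ, ((k ! : ℕ) : ℝ) ≠ 0 := fun k => Nat.cast_ne_zero.mpr k.factorial_ne_zero
  rw [aF, cf_rec x n hn, Finset.sum_div]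
  refine Finset.sum_congr rfl fun m hm => ?_
  simp only [Finset.mem_range] at hm
  have hmn : m ≤ n := by omega
  have hfact : ((n.choose m : ℕ) : ℝ) * (m ! : ℝ) * ((n-m)! : ℝ) = (n ! : ℝ) := by
    rw [← Nat.cast_mul, ← Nat.cast_mul, Nat.choose_mul_factorial_mul_factorial hmn]
  rw [aF]
  field_simp
  rw [← hfact]
  ring

noncomputable def Rf (x : ℝ) (t : ℕ) : ℝ :=
  x * ((-1 : ℝ) ^ (t - 1) / (t ! : ℝ)) * ((1 / 2 : ℝ) ^ t - (-1 / 2 : ℝ) ^ t)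

lemma aF_conv (x : ℝ) (i : ℕ) :
    aF x (i+1) = ∑ j ∈ Finset.range (i+1), (x * lamF (i+1-j) / ((i+1-j)! : ℝ)) * aF x j := by
  rw [aF_rec x (i+1) (by omega)]
  rw [← Finset.sum_range_reflect]
  rw [Finset.sum_range_succ]
  have hlast : (x * lamF (i + 1 + 1 - 1 - (i+1)) / ((i + 1 + 1 - 1 - (i+1))! : ℝ))
      * aF x (i + 1 - (i + 1 + 1 - 1 - (i+1))) = 0 := by
    have : i + 1 + 1 - 1 - (i+1) = 0 := by omega
    rw [this, lamF_zero]
    ring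
  rw [hlast, add_zero]
  refine Finset.sum_congr rfl fun j hj => ?_
  simp only [Finset.mem_range] at hj
  have h1 : i + 1 + 1 - 1 - j = i + 1 - j := by omega
  have h2 : i + 1 - (i + 1 - j) = j := by omega
  rw [h1, h2]

lemma conv_key (x : ℝ) (iv : ℕ) :
    ∑ j ∈ Finset.range (iv+1), Rf x (iv-j+1) * ((-1:ℝ)^j * aF x j)
      = (-1:ℝ)^iv * aF x (iv+1) := by
  have step : ∀ j ∈ Finset.range (iv+1), Rf x (iv-j+1) * ((-1:ℝ)^j * aF x j)
      = (-1:ℝ)^iv * ((x * lamF (iv+1-j) / ((iv+1-j)! : ℝ)) * aF x j) := by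
    intro j hj
    simp only [Finset.mem_range] at hj
    have hj' : j ≤ iv := by omega
    have h1 : iv - j + 1 - 1 = iv - j := by omega
    have h3 : iv + 1 - j = iv - j + 1 := by omega
    have h2 : (-1:ℝ)^(iv-j) * (-1:ℝ)^j = (-1:ℝ)^iv := by
      rw [← pow_add]
      congr 1
      omega
    rw [Rf, h1, h3]
    have hlam : (1/2:ℝ)^(iv-j+1) - (-1/2:ℝ)^(iv-j+1) = lamF (iv-j+1) := rfl
    rw [hlam]
    have hf : ((iv-j+1)! : ℝ) ≠ 0 := Nat.cast_ne_zero.mpr (iv-j+1).factorial_ne_zero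
    field_simp
    linear_combination (x * lamF (iv-j+1) * aF x j) * h2
  rw [Finset.sum_congr rfl step, ← Finset.mul_sum, ← aF_conv]

theorem central_fubini_det_repr (x : ℝ) (n : ℕ) (hn : 1 ≤ n) :
    centralFubini n x / (n ! : ℝ) =
      Matrix.det (Matrix.of fun i j : Fin n =>
        if (j : ℕ) ≤ (i : ℕ) then
          x * ((-1 : ℝ) ^ ((i : ℕ) - (j : ℕ) + 1 - 1) / (((i : ℕ) - (j : ℕ) + 1)! : ℝ)) *
            ((1 / 2 : ℝ) ^ ((i : ℕ) - (j : ℕ) + 1) - (-1 / 2 : ℝ) ^ ((i : ℕ) - (j : ℕ) + 1))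
        else if (j : ℕ) = (i : ℕ) + 1 then 1 else 0) := by
  obtain ⟨p, rfl⟩ : ∃ p, n = p + 1 := ⟨n - 1, by omega⟩
  set M : Matrix (Fin (p+1)) (Fin (p+1)) ℝ := Matrix.of (fun i j : Fin (p+1) =>
        if (j : ℕ) ≤ (i : ℕ) then
          x * ((-1 : ℝ) ^ ((i : ℕ) - (j : ℕ) + 1 - 1) / (((i : ℕ) - (j : ℕ) + 1)! : ℝ)) *
            ((1 / 2 : ℝ) ^ ((i : ℕ) - (j : ℕ) + 1) - (-1 / 2 : ℝ) ^ ((i : ℕ) - (j : ℕ) + 1))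
        else if (j : ℕ) = (i : ℕ) + 1 then 1 else 0) with hM
  show aF x (p+1) = M.det
  have hMentry : ∀ i j : Fin (p+1), M i j =
      (if (j : ℕ) ≤ (i : ℕ) then Rf x ((i : ℕ) - (j : ℕ) + 1)
       else if (j : ℕ) = (i : ℕ) + 1 then 1 else 0) := by
    intro i j
    rw [hM, Matrix.of_apply, Rf]
  set u : Fin (p+1) → ℝ := fun j => (-1:ℝ)^(j:ℕ) * aF x (j:ℕ) with hu
  have hMu : M.mulVec u = Pi.single (Fin.last p) ((-1:ℝ)^p * aF x (p+1)) := by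
    funext i
    have hrow : (M.mulVec u) i = ∑ j ∈ Finset.range (p+1),
        (if j ≤ (i:ℕ) then Rf x ((i:ℕ) - j + 1) else if j = (i:ℕ) + 1 then 1 else 0)
          * ((-1:ℝ)^j * aF x j) := by
      rw [← Fin.sum_univ_eq_sum_range (fun j =>
        (if j ≤ (i:ℕ) then Rf x ((i:ℕ) - j + 1) else if j = (i:ℕ) + 1 then 1 else 0)
          * ((-1:ℝ)^j * aF x j)) (p+1)]
      simp only [Matrix.mulVec, dotProduct]
      refine Finset.sum_congr rfl fun j _ => ?_
      show M i j * u j = _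
      rw [hMentry, hu]
    rcases Nat.lt_or_ge (i : ℕ) p with hip | hip
    · -- i < p : entry of Pi.single is 0
      have hine : i ≠ Fin.last p := by
        intro h
        rw [h] at hip
        simp at hip
      rw [hrow, Pi.single_eq_of_ne hine]
      have hsplit : ∑ j ∈ Finset.range (p+1),
          (if j ≤ (i:ℕ) then Rf x ((i:ℕ) - j + 1) else if j = (i:ℕ) + 1 then 1 else 0)
            * ((-1:ℝ)^j * aF x j)
          = ∑ j ∈ Finset.range ((i:ℕ)+2),
          (if j ≤ (i:ℕ) then Rf x ((i:ℕ) - j + 1) else if j = (i:ℕ) + 1 then 1 else 0)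
            * ((-1:ℝ)^j * aF x j) := by
        refine (Finset.sum_subset (Finset.range_subset_range.mpr (by omega)) ?_).symm
        intro a ha hna
        simp only [Finset.mem_range] at ha hna
        rw [if_neg (by omega), if_neg (by omega), zero_mul]
      rw [hsplit, Finset.sum_range_succ]
      have h2 : (if (i:ℕ)+1 ≤ (i:ℕ) then Rf x ((i:ℕ) - ((i:ℕ)+1) + 1)
            else if (i:ℕ)+1 = (i:ℕ) + 1 then 1 else 0) * ((-1:ℝ)^((i:ℕ)+1) * aF x ((i:ℕ)+1))
          = (-1:ℝ)^((i:ℕ)+1) * aF x ((i:ℕ)+1) := by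
        rw [if_neg (by omega), if_pos rfl, one_mul]
      rw [h2]
      have h3 : ∑ j ∈ Finset.range ((i:ℕ)+1),
          (if j ≤ (i:ℕ) then Rf x ((i:ℕ) - j + 1) else if j = (i:ℕ) + 1 then 1 else 0)
            * ((-1:ℝ)^j * aF x j)
          = ∑ j ∈ Finset.range ((i:ℕ)+1), Rf x ((i:ℕ) - j + 1) * ((-1:ℝ)^j * aF x j) := by
        refine Finset.sum_congr rfl fun j hj => ?_
        simp only [Finset.mem_range] at hj
        rw [if_pos (by omega)]
      rw [h3, conv_key]
      ring
    · -- i = last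
      have hip' : (i : ℕ) = p := by
        have := i.isLt
        omega
      have hilast : i = Fin.last p := by
        apply Fin.ext
        simpa using hip'
      rw [hrow, hilast, Pi.single_eq_same]
      have h3 : ∑ j ∈ Finset.range (p+1),
          (if j ≤ (i:ℕ) then Rf x ((i:ℕ) - j + 1) else if j = (i:ℕ) + 1 then 1 else 0)
            * ((-1:ℝ)^j * aF x j)
          = ∑ j ∈ Finset.range (p+1), Rf x (p - j + 1) * ((-1:ℝ)^j * aF x j) := by
        refine Finset.sum_congr rfl fun j hj => ?_
        simp only [Finset.mem_range] at hj
        rw [hip', if_pos (by omega)]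
      rw [hilast] at h3
      rw [h3, conv_key]
  -- Cramer step
  have hu0 : u 0 = 1 := by
    rw [hu]
    simp [aF_zero]
  have hdet1 : (M.updateCol 0 (M.mulVec u)).det = M.det := by
    have h := Matrix.cramer_apply M (M.mulVec u) 0
    rw [Matrix.cramer_eq_adjugate_mulVec, Matrix.mulVec_mulVec, Matrix.adjugate_mul,
      Matrix.smul_mulVec, Matrix.one_mulVec] at h
    rw [← h, Pi.smul_apply, hu0, smul_eq_mul, mul_one]
  have hdet2 : (M.updateCol 0 (M.mulVec u)).det = aF x (p+1) := by
    rw [hMu, Matrix.det_succ_column_zero]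
    rw [Finset.sum_eq_single (Fin.last p)]
    · have hsub : ((M.updateCol 0 (Pi.single (Fin.last p) ((-1:ℝ)^p * aF x (p+1)))).submatrix
          (Fin.last p).succAbove Fin.succ).det = 1 := by
        have hT : ∀ a b : Fin p,
            (M.updateCol 0 (Pi.single (Fin.last p) ((-1:ℝ)^p * aF x (p+1)))).submatrix
              (Fin.last p).succAbove Fin.succ a b = M a.castSucc b.succ := by
          intro a b
          rw [Matrix.submatrix_apply, Fin.succAbove_last, Matrix.updateCol_ne (Fin.succ_ne_zero b)]
        rw [Matrix.det_of_lowerTriangular _ ?ht]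
        case ht =>
          intro a b hab
          have hba : (a : ℕ) < (b : ℕ) := hab
          rw [hT, hMentry]
          rw [if_neg (by simp [Fin.val_succ]; omega), if_neg (by simp [Fin.val_succ]; omega)]
        refine Finset.prod_eq_one fun a _ => ?_
        rw [hT, hMentry]
        rw [if_neg (by simp [Fin.val_succ]), if_pos (by simp [Fin.val_succ])]
      rw [hsub, Matrix.updateCol_self, Pi.single_eq_same, Fin.val_last, mul_one]
      have hsq : (-1:ℝ)^p * ((-1:ℝ)^p * aF x (p+1)) = aF x (p+1) := by
        rw [← mul_assoc, ← pow_add, ← two_mul, pow_mul]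
        norm_num
      exact hsq
    · intro b _ hb
      rw [Matrix.updateCol_self, Pi.single_eq_of_ne hb, mul_zero, zero_mul]
    · intro h
      exact absurd (Finset.mem_univ _) h
  rw [← hdet2, hdet1]
end
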